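/- Let n ≥ 1 and equip ℂ^{n+1} with its standard Hermitian inner product, and let ℓ ⊆ ℂ^{n+1} be a one-dimensional complex subspace. The map (L,P) ↦ L is a bijection from the set of flags (L,P) (L ⊆ P, dim L = 1, dim P = 2) with L^⊥ ∩ P = ℓ onto the set of one-dimensional complex subspaces of ℓ^⊥, with inverse L ↦ (L, ℓ ⊔ L). (The fibre of the twistor map τ over ℓ is identified with the projective space of the hyperplane ℓ^⊥.) -/

import Mathlib

/-!
A flag `(L, P)` in the fibre over `ℓ` splits orthogonally as `P = L ⊕ (Lᗮ ⊓ P) = L ⊕ ℓ`, so `P = ℓ ⊔ L`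
is determined by `L`, and `L ⊥ ℓ`. Conversely, for a line `L ⊥ ℓ` the sum `ℓ ⊔ L` is direct, hence a
plane, and since `ℓ ≤ Lᗮ` the modular law gives `Lᗮ ⊓ (ℓ ⊔ L) = ℓ ⊔ (L ⊓ Lᗮ) = ℓ`.
-/

namespace Submodule

variable {𝕜 E : Type*} [RCLike 𝕜] [NormedAddCommGroup E] [InnerProductSpace 𝕜 E]

theorem le_orthogonal_symm {K₁ K₂ : Submodule 𝕜 E} (h : K₁ ≤ K₂ᗮ) : K₂ ≤ K₁ᗮ :=
  isOrtho_iff_le.mp (isOrtho_iff_le.mpr h).symm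

theorem orthogonal_inf_sup_eq_of_le_orthogonal {ℓ L : Submodule 𝕜 E} (h : L ≤ ℓᗮ) :
    Lᗮ ⊓ (ℓ ⊔ L) = ℓ := by
  rw [inf_comm, sup_inf_assoc_of_le L (le_orthogonal_symm h), inf_orthogonal_eq_bot, sup_bot_eq]

theorem finrank_sup_of_le_orthogonal {ℓ L : Submodule 𝕜 E} [FiniteDimensional 𝕜 ℓ]
    [FiniteDimensional 𝕜 L] (h : L ≤ ℓᗮ) :
    Module.finrank 𝕜 (ℓ ⊔ L : Submodule 𝕜 E) = Module.finrank 𝕜 ℓ + Module.finrank 𝕜 L := by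
  rw [← finrank_sup_add_finrank_inf_eq, ((orthogonal_disjoint ℓ).mono_right h).eq_bot,
    finrank_bot, add_zero]

theorem sup_eq_of_orthogonal_inf_eq {ℓ L P : Submodule 𝕜 E} [L.HasOrthogonalProjection]
    (hLP : L ≤ P) (h : Lᗮ ⊓ P = ℓ) : ℓ ⊔ L = P := by
  rw [← h, sup_comm]
  exact sup_orthogonal_inf_of_hasOrthogonalProjection hLP

theorem le_orthogonal_of_orthogonal_inf_eq {ℓ L P : Submodule 𝕜 E} (h : Lᗮ ⊓ P = ℓ) :
    L ≤ ℓᗮ :=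
  le_orthogonal_symm (h ▸ inf_le_left)

end Submodule

theorem twistor_fibre_is_projective_space_general (n : ℕ)
    (ℓ : Submodule ℂ (EuclideanSpace ℂ (Fin (n + 1))))
    (hℓ : Module.finrank ℂ ℓ = 1) :
    Set.BijOn
      (fun p : Submodule ℂ (EuclideanSpace ℂ (Fin (n + 1))) ×
          Submodule ℂ (EuclideanSpace ℂ (Fin (n + 1))) => p.1)
      {p | p.1 ≤ p.2 ∧ Module.finrank ℂ p.1 = 1 ∧ Module.finrank ℂ p.2 = 2 ∧
        p.1ᗮ ⊓ p.2 = ℓ}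
      {m | Module.finrank ℂ m = 1 ∧ m ≤ ℓᗮ} ∧
    Set.InvOn
      (fun L : Submodule ℂ (EuclideanSpace ℂ (Fin (n + 1))) => (L, ℓ ⊔ L))
      (fun p : Submodule ℂ (EuclideanSpace ℂ (Fin (n + 1))) ×
          Submodule ℂ (EuclideanSpace ℂ (Fin (n + 1))) => p.1)
      {p | p.1 ≤ p.2 ∧ Module.finrank ℂ p.1 = 1 ∧ Module.finrank ℂ p.2 = 2 ∧
        p.1ᗮ ⊓ p.2 = ℓ}
      {m | Module.finrank ℂ m = 1 ∧ m ≤ ℓᗮ} := by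
  refine (fun hinv => ⟨hinv.bijOn ?mapsTo_line ?mapsTo_flag, hinv⟩) ⟨?leftInv, fun L _ => rfl⟩
  case leftInv =>
    rintro ⟨L, P⟩ ⟨hLP, -, -, hfibre⟩
    exact Prod.ext rfl (Submodule.sup_eq_of_orthogonal_inf_eq hLP hfibre)
  case mapsTo_line =>
    rintro ⟨L, P⟩ ⟨-, hL, -, hfibre⟩
    exact ⟨hL, Submodule.le_orthogonal_of_orthogonal_inf_eq hfibre⟩
  case mapsTo_flag =>
    rintro L ⟨hL, hLℓ⟩
    refine ⟨le_sup_right, hL, ?_, Submodule.orthogonal_inf_sup_eq_of_le_orthogonal hLℓ⟩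
    rw [Submodule.finrank_sup_of_le_orthogonal hLℓ, hℓ, hL]

/-- The fibre of the twistor map over a line `ℓ` is identified with the
projective space of the hyperplane `ℓ^⊥`: the map `(L,P) ↦ L` is a bijection
from the flags `(L,P)` with `L^⊥ ∩ P = ℓ` onto the lines in `ℓ^⊥`, with
inverse `L ↦ (L, ℓ ⊔ L)`. -/
theorem twistor_fibre_is_projective_space (n : ℕ) (hn : 1 ≤ n)
    (ℓ : Submodule ℂ (EuclideanSpace ℂ (Fin (n + 1))))
    (hℓ : Module.finrank ℂ ℓ = 1) :
    Set.BijOn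
      (fun p : Submodule ℂ (EuclideanSpace ℂ (Fin (n + 1))) ×
          Submodule ℂ (EuclideanSpace ℂ (Fin (n + 1))) => p.1)
      {p | p.1 ≤ p.2 ∧ Module.finrank ℂ p.1 = 1 ∧ Module.finrank ℂ p.2 = 2 ∧
        p.1ᗮ ⊓ p.2 = ℓ}
      {m | Module.finrank ℂ m = 1 ∧ m ≤ ℓᗮ} ∧
    Set.InvOn
      (fun L : Submodule ℂ (EuclideanSpace ℂ (Fin (n + 1))) => (L, ℓ ⊔ L))
      (fun p : Submodule ℂ (EuclideanSpace ℂ (Fin (n + 1))) ×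
          Submodule ℂ (EuclideanSpace ℂ (Fin (n + 1))) => p.1)
      {p | p.1 ≤ p.2 ∧ Module.finrank ℂ p.1 = 1 ∧ Module.finrank ℂ p.2 = 2 ∧
        p.1ᗮ ⊓ p.2 = ℓ}
      {m | Module.finrank ℂ m = 1 ∧ m ≤ ℓᗮ} :=
  twistor_fibre_is_projective_space_general n ℓ hℓ
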